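/- arXiv:2108.10040 — 3 statements merged into one kernel-verified Lean document; each statement's English description precedes it below -/
import Mathlib

section
/- Let f, G : Matrix (Fin 4) (Fin 4) ℝ with G symmetric and det G < 0, a : Fin 4 → ℝ, m : ℝ, and let L̃(f, a, G) = ( −(1/4) ∑_{α,β,ξ,η} f α β · f ξ η · G α ξ · G β η + (1/2) m^2 ∑_{α,β} a α · a β · G α β ) · (−det G)^{−1/2} be the Proca Lagrangian density. Define the metric energy-momentum tensor density T̃^μ_ν = ∑_{β} (∂L̃/∂G_{(ν,β)}) · G μ β + ∑_{β} (∂L̃/∂G_{(β,ν)}) · G β μ and the canonical one θ̃^μ_ν = ∑_{β} (∂L̃/∂f_{(β,μ)}) · f β ν − (if μ = ν then L̃(f,a,G) else 0). Then for all μ, ν ∈ Fin 4: T̃^μ_ν = θ̃^μ_ν + ∑_{β} (∂L̃/∂f_{(μ,β)}) · f ν β + (∂L̃/∂a_μ) · a ν. In particular the metric and canonical energy-momentum tensors do not coincide for the Proca system. -/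
/-!
The density `L = ℒ(f, a, g) · (-det g)^(-1/2)` is covariant under a change of basis
`(f, a, g) ↦ (Aᵀ f A, Aᵀ a, A⁻¹ g A⁻ᵀ)`: the scalar `ℒ` is invariant and the volume factor picks
up `|det A|`. Differentiating at `A = 1` in the direction `-E` gives
`DL(W_E) = -tr E · L`, where `W_E` is the infinitesimal action: the variation of `ℒ` along `W_E`
cancels by cyclicity of the trace, and Jacobi's formula `d det = tr (adj g · dg)` turns the
variation of the volume factor into `-tr E` times itself. For `E = E_{νμ}` the left-hand side
expands into exactly the partial derivatives in the relation, and `tr E = δ_{μν}`.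
-/

attribute [local instance] Matrix.normedAddCommGroup Matrix.normedSpace

open Matrix

theorem det_updateRow_eq_sum {n R : Type*} [Fintype n] [DecidableEq n] [CommRing R]
    (A : Matrix n n R) (i : n) (b : n → R) :
    (A.updateRow i b).det = ∑ j, b j * A.adjugate j i := by
  rw [← cramer_transpose_apply, cramer_eq_adjugate_mulVec, ← adjugate_transpose]
  simp [mulVec, dotProduct, mul_comm]

section MatrixCalculus

variable {𝕜 : Type*} [NontriviallyNormedField 𝕜] [CompleteSpace 𝕜]
  {E : Type*} [NormedAddCommGroup E] [NormedSpace 𝕜 E] {x : E}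

theorem HasFDerivAt.matrix_mul {n : Type*} [Fintype n] [DecidableEq n]
    {u v : E → Matrix n n 𝕜} {u' v' : E →L[𝕜] Matrix n n 𝕜}
    (hu : HasFDerivAt u u' x) (hv : HasFDerivAt v v' x) :
    HasFDerivAt (fun y => u y * v y)
      ((LinearMap.mul 𝕜 (Matrix n n 𝕜)).toContinuousBilinearMap.precompR E (u x) v' +
        (LinearMap.mul 𝕜 (Matrix n n 𝕜)).toContinuousBilinearMap.precompL E u' (v x)) x :=
  (LinearMap.mul 𝕜 (Matrix n n 𝕜)).toContinuousBilinearMap.hasFDerivAt_of_bilinear hu hv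

theorem HasFDerivAt.matrix_mulVec {m n : Type*} [Fintype m] [Fintype n]
    {g : E → Matrix m n 𝕜} {a : E → n → 𝕜} {g' : E →L[𝕜] Matrix m n 𝕜} {a' : E →L[𝕜] n → 𝕜}
    (hg : HasFDerivAt g g' x) (ha : HasFDerivAt a a' x) :
    HasFDerivAt (fun y => g y *ᵥ a y)
      ((mulVecBilin 𝕜 𝕜 : Matrix m n 𝕜 →ₗ[𝕜] (n → 𝕜) →ₗ[𝕜] m → 𝕜).toContinuousBilinearMap.precompR
          E (g x) a' +
        (mulVecBilin 𝕜 𝕜 : Matrix m n 𝕜 →ₗ[𝕜] (n → 𝕜) →ₗ[𝕜] m → 𝕜).toContinuousBilinearMap.precompL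
          E g' (a x)) x :=
  (mulVecBilin 𝕜 𝕜 : Matrix m n 𝕜 →ₗ[𝕜] (n → 𝕜) →ₗ[𝕜] m → 𝕜).toContinuousBilinearMap
    |>.hasFDerivAt_of_bilinear hg ha

theorem HasFDerivAt.dotProduct {n : Type*} [Fintype n] {a b : E → n → 𝕜} {a' b' : E →L[𝕜] n → 𝕜}
    (ha : HasFDerivAt a a' x) (hb : HasFDerivAt b b' x) :
    HasFDerivAt (fun y => a y ⬝ᵥ b y)
      ((dotProductBilin 𝕜 𝕜 : (n → 𝕜) →ₗ[𝕜] (n → 𝕜) →ₗ[𝕜] 𝕜).toContinuousBilinearMap.precompR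
          E (a x) b' +
        (dotProductBilin 𝕜 𝕜 : (n → 𝕜) →ₗ[𝕜] (n → 𝕜) →ₗ[𝕜] 𝕜).toContinuousBilinearMap.precompL
          E a' (b x)) x :=
  (dotProductBilin 𝕜 𝕜 : (n → 𝕜) →ₗ[𝕜] (n → 𝕜) →ₗ[𝕜] 𝕜).toContinuousBilinearMap
    |>.hasFDerivAt_of_bilinear ha hb

theorem HasFDerivAt.matrix_transpose {m n : Type*} [Fintype m] [Fintype n]
    {u : E → Matrix m n 𝕜} {u' : E →L[𝕜] Matrix m n 𝕜} (hu : HasFDerivAt u u' x) :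
    HasFDerivAt (fun y => (u y)ᵀ)
      ((LinearMap.toContinuousLinearMap (transposeLinearEquiv m n 𝕜 𝕜).toLinearMap).comp u') x :=
  (LinearMap.toContinuousLinearMap (transposeLinearEquiv m n 𝕜 𝕜).toLinearMap).hasFDerivAt.comp x hu

theorem HasFDerivAt.matrix_trace {n : Type*} [Fintype n]
    {u : E → Matrix n n 𝕜} {u' : E →L[𝕜] Matrix n n 𝕜} (hu : HasFDerivAt u u' x) :
    HasFDerivAt (fun y => trace (u y))
      ((LinearMap.toContinuousLinearMap (traceLinearMap n 𝕜 𝕜)).comp u') x :=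
  (LinearMap.toContinuousLinearMap (traceLinearMap n 𝕜 𝕜)).hasFDerivAt.comp x hu

theorem hasFDerivAt_det {n : Type*} [Fintype n] [DecidableEq n] (A : Matrix n n 𝕜) :
    HasFDerivAt det
      (LinearMap.toContinuousLinearMap (traceLinearMap n 𝕜 𝕜 ∘ₗ LinearMap.mulLeft 𝕜 A.adjugate))
      A := by
  let detRows : ContinuousMultilinearMap 𝕜 (fun _ : n => n → 𝕜) 𝕜 :=
    ⟨(detRowAlternating (n := n) (R := 𝕜)).toMultilinearMap, continuous_id.matrix_det⟩
  refine (detRows.hasFDerivAt A).congr_fderiv ?_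
  ext H
  refine (detRows.linearDeriv_apply (A : n → n → 𝕜) H).trans ?_
  change ∑ i, (A.updateRow i (H i)).det = trace (A.adjugate * of H)
  simp only [det_updateRow_eq_sum, trace, diag, mul_apply]
  rw [Finset.sum_comm]
  exact Finset.sum_congr rfl fun i _ => Finset.sum_congr rfl fun j _ => mul_comm _ _

end MatrixCalculus

section Proca

variable {n : Type*} [Fintype n]

/-- `(f_{αβ}, a_α, g^{αβ})`: the third component is the inverse metric. -/
abbrev ProcaConfig (n : Type*) := Matrix n n ℝ × (n → ℝ) × Matrix n n ℝ

noncomputable def procaLagrangian [DecidableEq n] (m : ℝ) (x : ProcaConfig n) : ℝ :=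
  (-(1 / 4) * trace (x.1ᵀ * x.2.2 * x.1 * x.2.2ᵀ) + 1 / 2 * m ^ 2 * (x.2.1 ⬝ᵥ x.2.2 *ᵥ x.2.1)) *
    (-x.2.2.det) ^ (-(1 / 2) : ℝ)

/-- The velocity at `t = 0` of `(Aₜᵀ f Aₜ, Aₜᵀ a, Aₜ⁻¹ g Aₜ⁻ᵀ)` for `Aₜ = 1 - t E`. -/
def glGenerator (E : Matrix n n ℝ) (x : ProcaConfig n) : ProcaConfig n :=
  (-(Eᵀ * x.1 + x.1 * E), -(Eᵀ *ᵥ x.2.1), E * x.2.2 + x.2.2 * Eᵀ)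

theorem trace_transpose_mul_mul_mul_transpose (f g : Matrix n n ℝ) :
    trace (fᵀ * g * f * gᵀ) = ∑ α, ∑ β, ∑ ξ, ∑ η, f α β * f ξ η * g α ξ * g β η := by
  rw [Matrix.mul_assoc, Matrix.mul_assoc, trace_mul_comm]
  simp only [trace, diag, mul_apply, transpose_apply, Finset.sum_mul, Finset.mul_sum]
  refine Finset.sum_congr rfl fun α _ => Finset.sum_congr rfl fun β _ =>
    Finset.sum_congr rfl fun ξ _ => Finset.sum_congr rfl fun η _ => by ring

theorem dotProduct_mulVec_self (a : n → ℝ) (g : Matrix n n ℝ) :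
    a ⬝ᵥ g *ᵥ a = ∑ α, ∑ β, a α * a β * g α β := by
  simp only [dotProduct, mulVec, Finset.mul_sum]
  exact Finset.sum_congr rfl fun α _ => Finset.sum_congr rfl fun β _ => by ring

theorem fderiv_procaLagrangian_apply [DecidableEq n] (m : ℝ) {f g : Matrix n n ℝ} {a : n → ℝ}
    (hg : g.det ≠ 0) (φ γ : Matrix n n ℝ) (b : n → ℝ) :
    fderiv ℝ (procaLagrangian m) (f, a, g) (φ, b, γ) =
      (-(1 / 4) * trace (fᵀ * g * f * gᵀ) + 1 / 2 * m ^ 2 * (a ⬝ᵥ g *ᵥ a)) *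
          (-(1 / 2) * (-g.det) ^ (-(1 / 2) - 1 : ℝ) * -trace (g.adjugate * γ)) +
        (-g.det) ^ (-(1 / 2) : ℝ) *
          (-(1 / 4) * trace (fᵀ * g * f * γᵀ + (fᵀ * g * φ + (fᵀ * γ + φᵀ * g) * f) * gᵀ) +
            1 / 2 * m ^ 2 * (a ⬝ᵥ (g *ᵥ b + γ *ᵥ a) + b ⬝ᵥ g *ᵥ a)) := by
  have hF : HasFDerivAt (fun y : ProcaConfig n => y.1) _ (f, a, g) := hasFDerivAt_fst (𝕜 := ℝ)
  have hA : HasFDerivAt (fun y : ProcaConfig n => y.2.1) _ (f, a, g) :=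
    (hasFDerivAt_snd (𝕜 := ℝ)).fst
  have hG : HasFDerivAt (fun y : ProcaConfig n => y.2.2) _ (f, a, g) :=
    (hasFDerivAt_snd (𝕜 := ℝ)).snd
  have hmaxwell :=
    (((hF.matrix_transpose.matrix_mul hG).matrix_mul hF).matrix_mul hG.matrix_transpose).matrix_trace
  have hmass := hA.dotProduct (hG.matrix_mulVec hA)
  have hvolume :=
    (Real.hasDerivAt_rpow_const (p := -(1 / 2)) (Or.inl (neg_ne_zero.2 hg))).comp_hasFDerivAt
      (f, a, g) ((hasFDerivAt_det g).comp (f, a, g) hG).neg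
  -- `rw [HasFDerivAt.fderiv]` fails: the chain rule produces `NormedSpace.toModule` where `fderiv`
  -- has `Matrix.module`; the two agree only up to unfolding.
  exact congrArg (· (φ, b, γ))
    (((hmaxwell.const_mul (-(1 / 4))).add (hmass.const_mul (1 / 2 * m ^ 2))).mul hvolume).fderiv

theorem trace_variation_glGenerator (f g E : Matrix n n ℝ) :
    trace (fᵀ * g * f * (E * g + g * Eᵀ)ᵀ +
      (fᵀ * g * -(Eᵀ * f + f * E) + (fᵀ * (E * g + g * Eᵀ) + (-(Eᵀ * f + f * E))ᵀ * g) * f) * gᵀ)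
      = 0 := by
  simp only [transpose_add, transpose_neg, transpose_mul, transpose_transpose, Matrix.mul_add,
    Matrix.add_mul, Matrix.mul_neg, Matrix.neg_mul, trace_add, trace_neg, Matrix.mul_assoc]
  rw [trace_mul_comm Eᵀ]
  simp only [Matrix.mul_assoc]
  abel

theorem dotProduct_variation_glGenerator (a : n → ℝ) (g E : Matrix n n ℝ) :
    a ⬝ᵥ (g *ᵥ -(Eᵀ *ᵥ a) + (E * g + g * Eᵀ) *ᵥ a) + -(Eᵀ *ᵥ a) ⬝ᵥ g *ᵥ a = 0 := by
  simp only [mulVec_neg, add_mulVec, ← mulVec_mulVec, dotProduct_add, dotProduct_neg,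
    neg_dotProduct, mulVec_transpose, dotProduct_mulVec a E]
  abel

theorem trace_adjugate_mul_glGenerator [DecidableEq n] (g E : Matrix n n ℝ) :
    trace (g.adjugate * (E * g + g * Eᵀ)) = 2 * g.det * trace E := by
  rw [Matrix.mul_add, trace_add, ← Matrix.mul_assoc, trace_mul_comm, ← Matrix.mul_assoc,
    ← Matrix.mul_assoc, mul_adjugate, adjugate_mul, smul_mul_assoc, smul_mul_assoc, one_mul,
    one_mul, trace_smul, trace_smul, trace_transpose, smul_eq_mul]
  ring

theorem fderiv_procaLagrangian_glGenerator [DecidableEq n] (m : ℝ) {x : ProcaConfig n}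
    (hx : x.2.2.det ≠ 0) (E : Matrix n n ℝ) :
    fderiv ℝ (procaLagrangian m) x (glGenerator E x) = -(trace E * procaLagrangian m x) := by
  obtain ⟨f, a, g⟩ := x
  have hvolume : (-g.det) ^ (-(1 / 2) - 1 : ℝ) * g.det = -(-g.det) ^ (-(1 / 2) : ℝ) := by
    rw [Real.rpow_sub_one (neg_ne_zero.2 hx)]
    field_simp
  rw [glGenerator, fderiv_procaLagrangian_apply m hx, trace_variation_glGenerator,
    dotProduct_variation_glGenerator, trace_adjugate_mul_glGenerator, procaLagrangian]
  linear_combination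
    (-(1 / 4) * trace (fᵀ * g * f * gᵀ) + 1 / 2 * m ^ 2 * (a ⬝ᵥ g *ᵥ a)) * trace E * hvolume

theorem glGenerator_single [DecidableEq n] (x : ProcaConfig n) (μ ν : n) :
    glGenerator (single ν μ 1) x =
      ∑ β, x.2.2 μ β • ((0, 0, single ν β 1) : ProcaConfig n) +
        ∑ β, x.2.2 β μ • ((0, 0, single β ν 1) : ProcaConfig n) -
        ∑ β, x.1 β ν • ((single β μ 1, 0, 0) : ProcaConfig n) -
        ∑ β, x.1 ν β • ((single μ β 1, 0, 0) : ProcaConfig n) -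
        x.2.1 ν • ((0, Pi.single μ 1, 0) : ProcaConfig n) := by
  refine Prod.ext ?_ (Prod.ext ?_ ?_) <;> ext i <;> try ext j
  all_goals simp [glGenerator, mulVec, dotProduct, Prod.fst_sum, Prod.snd_sum, Matrix.sum_apply,
    single_apply, mul_apply, Pi.single_apply, ite_and, eq_comm, sub_eq_add_neg]

theorem map_glGenerator_single [DecidableEq n] (D : ProcaConfig n →L[ℝ] ℝ) (x : ProcaConfig n)
    (μ ν : n) :
    D (glGenerator (single ν μ 1) x) =
      ∑ β, D (0, 0, single ν β 1) * x.2.2 μ β + ∑ β, D (0, 0, single β ν 1) * x.2.2 β μ -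
        ∑ β, D (single β μ 1, 0, 0) * x.1 β ν - ∑ β, D (single μ β 1, 0, 0) * x.1 ν β -
        D (0, Pi.single μ 1, 0) * x.2.1 ν := by
  simp only [glGenerator_single, map_sub, map_add, map_sum, map_smul, smul_eq_mul, mul_comm]

end Proca

theorem proca_emt_relation_general
    (f G : Matrix (Fin 4) (Fin 4) ℝ) (hdet : G.det < 0)
    (a : Fin 4 → ℝ) (m : ℝ)
    (L : Matrix (Fin 4) (Fin 4) ℝ × (Fin 4 → ℝ) × Matrix (Fin 4) (Fin 4) ℝ → ℝ)
    (hL : L = fun x =>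
      (-(1 / 4) * ∑ α, ∑ β, ∑ ξ, ∑ η, x.1 α β * x.1 ξ η * x.2.2 α ξ * x.2.2 β η
        + (1 / 2) * m ^ 2 * ∑ α, ∑ β, x.2.1 α * x.2.1 β * x.2.2 α β)
      * (-x.2.2.det) ^ (-(1 / 2) : ℝ))
    (Tmet θcan : Fin 4 → Fin 4 → ℝ)
    (hT : Tmet = fun μ ν =>
      (∑ β, fderiv ℝ L (f, a, G) (0, 0, Matrix.single ν β 1) * G μ β)
      + (∑ β, fderiv ℝ L (f, a, G) (0, 0, Matrix.single β ν 1) * G β μ))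
    (hθ : θcan = fun μ ν =>
      (∑ β, fderiv ℝ L (f, a, G) (Matrix.single β μ 1, 0, 0) * f β ν)
      - (if μ = ν then L (f, a, G) else 0)) :
    ∀ μ ν : Fin 4,
      Tmet μ ν = θcan μ ν
        + (∑ β, fderiv ℝ L (f, a, G) (Matrix.single μ β 1, 0, 0) * f ν β)
        + fderiv ℝ L (f, a, G) (0, Pi.single μ 1, 0) * a ν := by
  have hL' : L = procaLagrangian m := by
    rw [hL]
    funext x
    rw [procaLagrangian, trace_transpose_mul_mul_mul_transpose, dotProduct_mulVec_self]
  subst hL' hT hθ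
  intro μ ν
  have hcov := fderiv_procaLagrangian_glGenerator m (x := (f, a, G)) hdet.ne (single ν μ 1)
  rw [map_glGenerator_single] at hcov
  rcases eq_or_ne μ ν with rfl | hμν
  · simp only [trace_single_eq_same, one_mul, if_true] at hcov ⊢
    linarith
  · simp only [trace_single_eq_of_ne _ _ _ hμν.symm, zero_mul, neg_zero, if_neg hμν] at hcov ⊢
    linarith

/-- the relation (Eq. (14)) between the metric and the canonical
energy-momentum tensor densities of the Proca system; they do not coincide. -/
theorem proca_emt_relation
    (f G : Matrix (Fin 4) (Fin 4) ℝ) (hG : G.IsSymm) (hdet : G.det < 0)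
    (a : Fin 4 → ℝ) (m : ℝ)
    (L : Matrix (Fin 4) (Fin 4) ℝ × (Fin 4 → ℝ) × Matrix (Fin 4) (Fin 4) ℝ → ℝ)
    (hL : L = fun x =>
      (-(1 / 4) * ∑ α, ∑ β, ∑ ξ, ∑ η, x.1 α β * x.1 ξ η * x.2.2 α ξ * x.2.2 β η
        + (1 / 2) * m ^ 2 * ∑ α, ∑ β, x.2.1 α * x.2.1 β * x.2.2 α β)
      * (-x.2.2.det) ^ (-(1 / 2) : ℝ))
    (Tmet θcan : Fin 4 → Fin 4 → ℝ)
    (hT : Tmet = fun μ ν =>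
      (∑ β, fderiv ℝ L (f, a, G) (0, 0, Matrix.single ν β 1) * G μ β)
      + (∑ β, fderiv ℝ L (f, a, G) (0, 0, Matrix.single β ν 1) * G β μ))
    (hθ : θcan = fun μ ν =>
      (∑ β, fderiv ℝ L (f, a, G) (Matrix.single β μ 1, 0, 0) * f β ν)
      - (if μ = ν then L (f, a, G) else 0)) :
    ∀ μ ν : Fin 4,
      Tmet μ ν = θcan μ ν
        + (∑ β, fderiv ℝ L (f, a, G) (Matrix.single μ β 1, 0, 0) * f ν β)
        + fderiv ℝ L (f, a, G) (0, Pi.single μ 1, 0) * a ν :=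
  proca_emt_relation_general f G hdet a m L hL Tmet θcan hT hθ
end

section
/- Let Riem : Fin 4 → Fin 4 → Fin 4 → Fin 4 → ℝ (the components R^η_{ξβλ} of the Riemann-Cartan tensor, treated as an independent tensor argument) and G : Matrix (Fin 4) (Fin 4) ℝ with det G < 0 (the contravariant metric g^{ξλ}). Define Ric ξ λ = ∑_{η} Riem η ξ η λ and the Einstein-Hilbert-Cartan scalar density R̃(Riem, G) = (∑_{ξ,λ} Ric ξ λ · G ξ λ) · (−det G)^{−1/2}. Then for all μ, ν ∈ Fin 4: ∑_{β} (∂R̃/∂G_{(ν,β)}) · G μ β + ∑_{β} (∂R̃/∂G_{(β,ν)}) · G β μ = ( ∑_{β} Ric ν β · G μ β + ∑_{β} Ric β ν · G β μ − (if μ = ν then ∑_{ξ,λ} Ric ξ λ · G ξ λ else 0) ) · (−det G)^{−1/2}, where the partial derivatives are Fréchet partial derivatives in the metric slot at (Riem, G). That is, the metric energy-momentum terms of the Einstein-Hilbert-Cartan Lagrangian equal R̃_ν^μ + R̃^μ_ν − δ^μ_ν R̃. -/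
attribute [local instance] Matrix.normedAddCommGroup Matrix.normedSpace

/-!
Write `S(G) = ∑ Ric_{ξλ} G^{ξλ}`, which is linear in `G`. Since the determinant is affine in each
entry, Jacobi's formula `∂ det G / ∂ G^{ij} = det G · (G⁻¹)_{ji}` gives
`∂R̃/∂G^{ij} = (Ric_{ij} − ½ S (G⁻¹)_{ji}) (−det G)^{−1/2}`.
Contracting with `G` turns `G⁻¹` into a Kronecker delta, and the two contractions
together produce `−S δ^μ_ν`.
-/

open Matrix

namespace Matrix

variable {n R : Type*} [Fintype n] [DecidableEq n] [CommRing R]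

theorem det_add_smul_single (A : Matrix n n R) (t : R) (i j : n) :
    (A + t • single i j 1).det = A.det + t * A.adjugate j i := by
  have hrow : A + t • single i j 1 = A.updateRow i (A i + t • Pi.single j 1) := by
    ext k l
    by_cases hk : k = i
    · subst hk
      simp [single_apply, Pi.single_apply, eq_comm]
    · simp [hk, Ne.symm hk]
  rw [hrow, det_updateRow_add, det_updateRow_smul, updateRow_eq_self, adjugate_apply]

theorem sum_add_mul_inv_mul_row (A B : Matrix n n R) (hA : IsUnit A.det) (c : R) (μ ν : n) :
    ∑ β, (B ν β + c * A⁻¹ β ν) * A μ β = ∑ β, B ν β * A μ β + if μ = ν then c else 0 := by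
  have hinv : ∑ β, A μ β * A⁻¹ β ν = if μ = ν then 1 else 0 := by
    simpa [mul_apply, one_apply] using congrFun (congrFun (mul_nonsing_inv A hA) μ) ν
  calc _ = ∑ β, B ν β * A μ β + c * ∑ β, A μ β * A⁻¹ β ν := by
        rw [Finset.mul_sum, ← Finset.sum_add_distrib]
        exact Finset.sum_congr rfl fun β _ => by ring
    _ = _ := by rw [hinv, mul_ite, mul_one, mul_zero]

theorem sum_add_mul_inv_mul_col (A B : Matrix n n R) (hA : IsUnit A.det) (c : R) (μ ν : n) :
    ∑ β, (B β ν + c * A⁻¹ ν β) * A β μ = ∑ β, B β ν * A β μ + if μ = ν then c else 0 := by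
  have h := sum_add_mul_inv_mul_row Aᵀ Bᵀ (by rwa [det_transpose]) c μ ν
  simp only [← transpose_nonsing_inv, transpose_apply] at h
  exact h

@[fun_prop]
theorem differentiable_det {𝕜 : Type*} [NontriviallyNormedField 𝕜] :
    Differentiable 𝕜 (det : Matrix n n 𝕜 → 𝕜) := by
  simp only [funext det_apply']
  fun_prop

end Matrix

theorem DifferentiableAt.fderiv_apply_zero_prod {𝕜 E F H : Type*} [NontriviallyNormedField 𝕜]
    [NormedAddCommGroup E] [NormedSpace 𝕜 E] [NormedAddCommGroup F] [NormedSpace 𝕜 F]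
    [NormedAddCommGroup H] [NormedSpace 𝕜 H] {f : E × F → H} {x : E} {y v : F} {d : H}
    (hf : DifferentiableAt 𝕜 f (x, y)) (hd : HasDerivAt (fun t : 𝕜 => f (x, y + t • v)) d 0) :
    fderiv 𝕜 f (x, y) (0, v) = d := by
  have hcurve : HasDerivAt (fun t : 𝕜 => (x, y + t • v)) (0, v) 0 := by
    simpa using
      (hasDerivAt_const (0 : 𝕜) x).prodMk (((hasDerivAt_id (0 : 𝕜)).smul_const v).const_add y)
  have hf' : HasFDerivAt f (fderiv 𝕜 f (x, y)) (x, y + (0 : 𝕜) • v) := by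
    simpa using hf.hasFDerivAt
  exact (hf'.comp_hasDerivAt 0 hcurve).unique hd

section ScalarDensity

variable {n : Type*} [Fintype n]

def ricci (Riem : n → n → n → n → ℝ) : Matrix n n ℝ :=
  fun ξ l => ∑ η, Riem η ξ η l

theorem differentiable_ricci : Differentiable ℝ (ricci : (n → n → n → n → ℝ) → Matrix n n ℝ) := by
  unfold ricci
  fun_prop

variable [DecidableEq n]

/-- For `p = -1/2` and `G = g^{ξλ}` this is the paper's `R̃ = R √(−g)`. -/
noncomputable def scalarDensity (p : ℝ) (Ric G : Matrix n n ℝ) : ℝ :=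
  (∑ ξ, ∑ l, Ric ξ l * G ξ l) * (-G.det) ^ p

theorem DifferentiableAt.scalarDensity {E : Type*} [NormedAddCommGroup E] [NormedSpace ℝ E]
    {f g : E → Matrix n n ℝ} {x : E} (p : ℝ) (hf : DifferentiableAt ℝ f x)
    (hg : DifferentiableAt ℝ g x) (hdet : (g x).det < 0) :
    DifferentiableAt ℝ (fun y => scalarDensity p (f y) (g y)) x := by
  unfold _root_.scalarDensity
  exact DifferentiableAt.mul (by fun_prop)
    ((by fun_prop : DifferentiableAt ℝ (fun y => -(g y).det) x).rpow_const (Or.inl (by linarith)))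

theorem hasDerivAt_scalarDensity_add_smul_single (p : ℝ) (Ric : Matrix n n ℝ)
    {G : Matrix n n ℝ} (hG : G.det < 0) (i j : n) :
    HasDerivAt (fun t : ℝ => scalarDensity p Ric (G + t • single i j 1))
      ((Ric i j + p * (∑ ξ, ∑ l, Ric ξ l * G ξ l) * G⁻¹ j i) * (-G.det) ^ p) 0 := by
  have hG₀ : -G.det ≠ 0 := by linarith
  have hcontr (t : ℝ) : ∑ ξ, ∑ l, Ric ξ l * (G + t • single i j 1 : Matrix n n ℝ) ξ l
      = ∑ ξ, ∑ l, Ric ξ l * G ξ l + t * Ric i j := by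
    simp [mul_add, Finset.sum_add_distrib, single_apply, ite_and, mul_comm t]
  have hvol : HasDerivAt (fun t : ℝ => (-(G.det + t * G.adjugate j i)) ^ p)
      (-G.adjugate j i * p * (-(G.det + 0 * G.adjugate j i)) ^ (p - 1)) 0 :=
    ((hasDerivAt_mul_const _).const_add _).neg.rpow_const (Or.inl (by simpa using hG₀))
  have hline :=
    ((hasDerivAt_mul_const (Ric i j)).const_add (∑ ξ, ∑ l, Ric ξ l * G ξ l)).fun_mul hvol
  simp only [scalarDensity, hcontr, det_add_smul_single]
  refine hline.congr_deriv ?_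
  simp only [zero_mul, add_zero, Real.rpow_sub_one hG₀, inv_def, Ring.inverse_eq_inv',
    Matrix.smul_apply, smul_eq_mul]
  field_simp

end ScalarDensity

/-- Eq. (18a), the metric derivative terms of the
Einstein-Hilbert-Cartan scalar density equal `R̃_ν^μ + R̃^μ_ν − δ^μ_ν R̃`. -/
theorem ehc_metric_derivative_terms
    (Riem : Fin 4 → Fin 4 → Fin 4 → Fin 4 → ℝ)
    (G : Matrix (Fin 4) (Fin 4) ℝ) (hdet : G.det < 0)
    (Ric : Fin 4 → Fin 4 → ℝ) (hRic : Ric = fun ξ l => ∑ η, Riem η ξ η l)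
    (Rt : (Fin 4 → Fin 4 → Fin 4 → Fin 4 → ℝ) × Matrix (Fin 4) (Fin 4) ℝ → ℝ)
    (hRt : Rt = fun x =>
      (∑ ξ, ∑ l, (∑ η, x.1 η ξ η l) * x.2 ξ l) * (-x.2.det) ^ (-(1 / 2) : ℝ)) :
    ∀ μ ν : Fin 4,
      (∑ β, fderiv ℝ Rt (Riem, G) (0, Matrix.single ν β 1) * G μ β)
      + (∑ β, fderiv ℝ Rt (Riem, G) (0, Matrix.single β ν 1) * G β μ)
      = ((∑ β, Ric ν β * G μ β) + (∑ β, Ric β ν * G β μ)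
          - (if μ = ν then ∑ ξ, ∑ l, Ric ξ l * G ξ l else 0))
        * (-G.det) ^ (-(1 / 2) : ℝ) := by
  intro μ ν
  replace hRic : Ric = ricci Riem := hRic
  replace hRt : Rt = fun x => scalarDensity (-(1 / 2)) (ricci x.1) x.2 := by
    rw [hRt]; rfl
  have hpartial (i j : Fin 4) : fderiv ℝ Rt (Riem, G) (0, single i j 1)
      = (Ric i j + -(1 / 2) * (∑ ξ, ∑ l, Ric ξ l * G ξ l) * G⁻¹ j i)
        * (-G.det) ^ (-(1 / 2) : ℝ) := by
    rw [hRt, hRic]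
    have hdiff := (differentiable_ricci.differentiableAt.comp (Riem, G)
      differentiableAt_fst).scalarDensity (-(1 / 2)) (g := Prod.snd) differentiableAt_snd hdet
    exact hdiff.fderiv_apply_zero_prod
      (hasDerivAt_scalarDensity_add_smul_single (-(1 / 2)) (ricci Riem) hdet i j)
  simp only [hpartial, mul_right_comm _ ((-G.det) ^ (-(1 / 2) : ℝ)), ← Finset.sum_mul]
  rw [sum_add_mul_inv_mul_row G Ric hdet.ne.isUnit, sum_add_mul_inv_mul_col G Ric hdet.ne.isUnit]
  split_ifs <;> ring
end

section
/- Let Riem : Fin 4 → Fin 4 → Fin 4 → Fin 4 → ℝ and let G : Matrix (Fin 4) (Fin 4) ℝ be symmetric with det G < 0. Define the quadratic (Kretschmann) gravity Lagrangian density L̃(Riem, G) = −(1/4) ∑_{ξ,η,ρ,α,σ,λ} Riem ξ η ρ α · Riem η ξ σ λ · G ρ σ · G α λ · (−det G)^{−1/2}. Then for all μ, ν ∈ Fin 4: (i) ∑_{ξ,β,λ} (∂L̃/∂Riem_{(ν,ξ,β,λ)}) · Riem μ ξ β λ = ∑_{η,β,λ} (∂L̃/∂Riem_{(η,μ,β,λ)})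 · Riem η ν β λ (the first-index and second-index replacement terms cancel in the tensor identity), and (ii) the metric energy-momentum tensor density equals the canonical one: ∑_{β} (∂L̃/∂G_{(ν,β)}) · G μ β + ∑_{β} (∂L̃/∂G_{(β,ν)}) · G β μ = ∑_{η,ξ,λ} (∂L̃/∂Riem_{(η,ξ,μ,λ)}) · Riem η ξ ν λ + ∑_{η,ξ,β} (∂L̃/∂Riem_{(η,ξ,β,μ)}) · Riem η ξ β ν − (if μ = ν then L̃(Riem,G) else 0). In particular the canonical energy-momentum tensor of the Riemann-tensor-squared Lagrangian is symmetric. -/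
/-!
With `s = (-det g)^(-1/2)`, the Riemann partials are `∂L̃/∂R_{abcd} = -½ s R_{ba}{}^{cd}`
(last two slots raised): for symmetric `g` both Riemann factors of the Kretschmann scalar
contribute equally. The metric partials are `-¼ s (∂K/∂g_{ij} - ½ K (g⁻¹)_{ji})`, the second
term coming from Jacobi's formula `∂ det g / ∂g_{ij} = adj(g)_{ji}`; contracted with `g` it
produces the `δ^μ_ν L̃` term. Raising two slots is self-adjoint for the contraction of those
slots, which turns the first-slot replacement term into the second-slot one; after reindexing,
the contracted `∂K/∂g` is the sum of the third- and fourth-slot terms.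
-/

attribute [local instance] Matrix.normedAddCommGroup Matrix.normedSpace

open Finset

theorem Matrix.det_add_smul_single_s14 {n α : Type*} [Fintype n] [DecidableEq n] [CommRing α]
    (A : Matrix n n α) (i j : n) (t : α) :
    (A + t • Matrix.single i j 1).det = A.det + t * A.adjugate j i := by
  have hrow : A + t • Matrix.single i j 1 = A.updateRow i (A i + t • Pi.single j 1) := by
    ext a b
    by_cases ha : a = i
    · subst ha; simp [Matrix.single_apply, Pi.single_apply, eq_comm]
    · simp [ha, Ne.symm ha]
  rw [hrow, Matrix.det_updateRow_add, Matrix.updateRow_eq_self, Matrix.det_updateRow_smul,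
    Matrix.adjugate_apply]

@[fun_prop]
theorem Matrix.differentiable_det_s14 {n 𝕜 : Type*} [Fintype n] [DecidableEq n]
    [NontriviallyNormedField 𝕜] : Differentiable 𝕜 (fun A : Matrix n n 𝕜 => A.det) := by
  simp only [Matrix.det_apply]
  fun_prop

theorem Matrix.adjugate_apply_div_det {n K : Type*} [Fintype n] [DecidableEq n] [Field K]
    (A : Matrix n n K) (i j : n) : A.adjugate i j / A.det = A⁻¹ i j := by
  rw [Matrix.inv_def, Ring.inverse_eq_inv', Matrix.smul_apply, smul_eq_mul, div_eq_inv_mul]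

theorem sum_sum_comm_pairs {α β M : Type*} [Fintype α] [Fintype β] [AddCommMonoid M]
    (f : α → α → β → β → M) :
    ∑ a, ∑ b, ∑ c, ∑ d, f a b c d = ∑ c, ∑ d, ∑ a, ∑ b, f a b c d :=
  calc _ = ∑ p : α × α, ∑ q : β × β, f p.1 p.2 q.1 q.2 := by simp only [Fintype.sum_prod_type]
    _ = ∑ q : β × β, ∑ p : α × α, f p.1 p.2 q.1 q.2 := sum_comm
    _ = _ := by simp only [Fintype.sum_prod_type]

section

variable {ι : Type*} [Fintype ι]

def raiseLastTwo (R : ι → ι → ι → ι → ℝ) (g : Matrix ι ι ℝ) (a b c d : ι) : ℝ :=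
  ∑ σ, ∑ l, R a b σ l * g c σ * g d l

theorem sum_raiseLastTwo_mul_comm {g : Matrix ι ι ℝ} (hg : g.IsSymm)
    (R S : ι → ι → ι → ι → ℝ) (a b e f : ι) :
    ∑ c, ∑ d, raiseLastTwo R g a b c d * S e f c d
      = ∑ c, ∑ d, R a b c d * raiseLastTwo S g e f c d := by
  simp only [raiseLastTwo, sum_mul, mul_sum]
  rw [sum_sum_comm_pairs]
  refine sum_congr rfl fun c _ => sum_congr rfl fun d _ =>
    sum_congr rfl fun σ _ => sum_congr rfl fun l _ => ?_
  rw [hg.apply c σ, hg.apply d l]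
  ring

theorem sum_raiseLastTwo_first_eq_second {g : Matrix ι ι ℝ} (hg : g.IsSymm)
    (R : ι → ι → ι → ι → ℝ) (μ ν : ι) :
    ∑ ξ, ∑ β, ∑ l, raiseLastTwo R g ξ ν β l * R μ ξ β l
      = ∑ η, ∑ β, ∑ l, raiseLastTwo R g μ η β l * R η ν β l := by
  refine sum_congr rfl fun ξ _ => ?_
  rw [sum_raiseLastTwo_mul_comm hg]
  exact sum_congr rfl fun β _ => sum_congr rfl fun l _ => mul_comm _ _

def kretschmannScalar (R : ι → ι → ι → ι → ℝ) (g : Matrix ι ι ℝ) : ℝ :=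
  ∑ ξ, ∑ η, ∑ ρ, ∑ α, ∑ σ, ∑ l, R ξ η ρ α * R η ξ σ l * g ρ σ * g α l

def kretschmannMetricGrad (R : ι → ι → ι → ι → ℝ) (g : Matrix ι ι ℝ) (i j : ι) : ℝ :=
  ∑ ξ, ∑ η, ∑ α, ∑ l, R ξ η i α * R η ξ j l * g α l
    + ∑ ξ, ∑ η, ∑ ρ, ∑ σ, R ξ η ρ i * R η ξ σ j * g ρ σ

theorem kretschmannMetricGrad_comm {g : Matrix ι ι ℝ} (hg : g.IsSymm)
    (R : ι → ι → ι → ι → ℝ) (i j : ι) :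
    kretschmannMetricGrad R g i j = kretschmannMetricGrad R g j i := by
  unfold kretschmannMetricGrad
  congr 1 <;>
  · rw [sum_comm]
    refine sum_congr rfl fun η _ => sum_congr rfl fun ξ _ => ?_
    rw [sum_comm]
    refine sum_congr rfl fun α _ => sum_congr rfl fun l _ => ?_
    rw [hg.apply α l]
    ring

theorem sum_kretschmannMetricGrad_mul (R : ι → ι → ι → ι → ℝ) (g : Matrix ι ι ℝ) (μ ν : ι) :
    ∑ β, kretschmannMetricGrad R g ν β * g μ β
      = ∑ η, ∑ ξ, ∑ l, raiseLastTwo R g ξ η μ l * R η ξ ν l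
        + ∑ η, ∑ ξ, ∑ β, raiseLastTwo R g ξ η β μ * R η ξ β ν := by
  simp only [kretschmannMetricGrad, raiseLastTwo, add_mul, sum_add_distrib, sum_mul]
  -- move `β` inward until it sits among the summation indices of `raiseLastTwo`
  congr 1
  · rw [sum_comm]
    refine sum_congr rfl fun ξ _ => ?_
    rw [sum_comm]
    refine sum_congr rfl fun η _ => ?_
    rw [sum_comm]
    refine sum_congr rfl fun α _ => sum_congr rfl fun β _ => sum_congr rfl fun l _ => ?_
    ring
  · rw [sum_comm]
    refine sum_congr rfl fun ξ _ => ?_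
    rw [sum_comm]
    refine sum_congr rfl fun η _ => ?_
    rw [sum_comm]
    refine sum_congr rfl fun ρ _ => ?_
    rw [sum_comm]
    refine sum_congr rfl fun σ _ => sum_congr rfl fun β _ => ?_
    ring

theorem hasDerivAt_kretschmannScalar_line (R h : ι → ι → ι → ι → ℝ) (g k : Matrix ι ι ℝ) :
    HasDerivAt (fun t : ℝ => kretschmannScalar (R + t • h) (g + t • k))
      (∑ ξ, ∑ η, ∑ ρ, ∑ α, ∑ σ, ∑ l,
        (h ξ η ρ α * R η ξ σ l * g ρ σ * g α l + R ξ η ρ α * h η ξ σ l * g ρ σ * g α l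
          + R ξ η ρ α * R η ξ σ l * k ρ σ * g α l + R ξ η ρ α * R η ξ σ l * g ρ σ * k α l)) 0 := by
  have hline (a b : ℝ) : HasDerivAt (fun t : ℝ => a + t * b) b 0 := by
    simpa using (hasDerivAt_mul_const b).const_add a
  simp only [kretschmannScalar, Pi.add_apply, Pi.smul_apply, Matrix.add_apply, Matrix.smul_apply,
    smul_eq_mul]
  refine HasDerivAt.fun_sum fun ξ _ => HasDerivAt.fun_sum fun η _ => HasDerivAt.fun_sum fun ρ _ =>
    HasDerivAt.fun_sum fun α _ => HasDerivAt.fun_sum fun σ _ => HasDerivAt.fun_sum fun l _ => ?_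
  exact ((((hline _ _).fun_mul (hline _ _)).fun_mul (hline _ _)).fun_mul (hline _ _)).congr_deriv
    (by simp only [zero_mul, add_zero]; ring)

variable [DecidableEq ι]

noncomputable def kretschmannLagrangian (x : (ι → ι → ι → ι → ℝ) × Matrix ι ι ℝ) : ℝ :=
  -(1 / 4) * kretschmannScalar x.1 x.2 * (-x.2.det) ^ (-(1 / 2) : ℝ)

theorem differentiableAt_kretschmannLagrangian {R : ι → ι → ι → ι → ℝ} {g : Matrix ι ι ℝ}
    (hg : g.det ≠ 0) : DifferentiableAt ℝ kretschmannLagrangian (R, g) := by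
  unfold kretschmannLagrangian kretschmannScalar
  fun_prop (disch := exact Or.inl (neg_ne_zero.2 hg))

theorem hasLineDerivAt_kretschmannLagrangian {R h : ι → ι → ι → ι → ℝ} {g k : Matrix ι ι ℝ}
    {D δ : ℝ} (hg : g.det ≠ 0)
    (hK : HasDerivAt (fun t : ℝ => kretschmannScalar (R + t • h) (g + t • k)) D 0)
    (hδ : HasDerivAt (fun t : ℝ => (g + t • k).det) δ 0) :
    HasLineDerivAt ℝ kretschmannLagrangian
      (-(1 / 4) * (D - kretschmannScalar R g * (δ / g.det) / 2) * (-g.det) ^ (-(1 / 2) : ℝ))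
      (R, g) (h, k) := by
  have hneg : -g.det ≠ 0 := neg_ne_zero.2 hg
  have hpow : HasDerivAt (fun t : ℝ => (-(g + t • k).det) ^ (-(1 / 2) : ℝ))
      (-(1 / 2) * (-g.det) ^ (-(1 / 2) - 1 : ℝ) * -δ) 0 := by
    refine HasDerivAt.comp (0 : ℝ) (h₂ := fun x : ℝ => x ^ (-(1 / 2) : ℝ)) ?_ hδ.neg
    simpa using Real.hasDerivAt_rpow_const (p := -(1 / 2)) (Or.inl hneg)
  refine ((hK.const_mul (-(1 / 4))).fun_mul hpow).congr_deriv ?_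
  simp only [zero_smul, add_zero]
  rw [Real.rpow_sub_one hneg]
  field_simp
  ring

theorem fderiv_kretschmannLagrangian_eq {R h : ι → ι → ι → ι → ℝ} {g k : Matrix ι ι ℝ}
    {D δ : ℝ} (hg : g.det ≠ 0)
    (hK : HasDerivAt (fun t : ℝ => kretschmannScalar (R + t • h) (g + t • k)) D 0)
    (hδ : HasDerivAt (fun t : ℝ => (g + t • k).det) δ 0) :
    fderiv ℝ kretschmannLagrangian (R, g) (h, k) =
      -(1 / 4) * (D - kretschmannScalar R g * (δ / g.det) / 2) * (-g.det) ^ (-(1 / 2) : ℝ) :=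
  (differentiableAt_kretschmannLagrangian hg).lineDeriv_eq_fderiv.symm.trans
    (hasLineDerivAt_kretschmannLagrangian hg hK hδ).lineDeriv

theorem hasDerivAt_kretschmannScalar_riemann {R : ι → ι → ι → ι → ℝ} {g : Matrix ι ι ℝ}
    (hg : g.IsSymm) (a b c d : ι) :
    HasDerivAt (fun t : ℝ => kretschmannScalar
        (R + t • fun a' b' c' d' => if a' = a ∧ b' = b ∧ c' = c ∧ d' = d then 1 else 0) (g + t • 0))
      (2 * raiseLastTwo R g b a c d) 0 :=
  (hasDerivAt_kretschmannScalar_line _ _ _ _).congr_deriv <| by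
    simp only [ite_and, ite_mul, one_mul, zero_mul, mul_ite, mul_one, mul_zero, Matrix.zero_apply,
      add_zero, sum_add_distrib, sum_ite_irrel, sum_const_zero, sum_ite_eq', mem_univ, ↓reduceIte,
      hg.apply d, hg.apply c, raiseLastTwo]
    ring

theorem hasDerivAt_kretschmannScalar_metric (R : ι → ι → ι → ι → ℝ)
    (g : Matrix ι ι ℝ) (i j : ι) :
    HasDerivAt (fun t : ℝ => kretschmannScalar (R + t • 0) (g + t • Matrix.single i j 1))
      (kretschmannMetricGrad R g i j) 0 :=
  (hasDerivAt_kretschmannScalar_line _ _ _ _).congr_deriv <| by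
    simp [Matrix.single_apply, ite_and, sum_add_distrib, kretschmannMetricGrad]

theorem fderiv_kretschmannLagrangian_riemann {R : ι → ι → ι → ι → ℝ} {g : Matrix ι ι ℝ}
    (hg : g.IsSymm) (hdet : g.det ≠ 0) (a b c d : ι) :
    fderiv ℝ kretschmannLagrangian (R, g)
        ((fun a' b' c' d' => if a' = a ∧ b' = b ∧ c' = c ∧ d' = d then 1 else 0), 0)
      = -(1 / 2) * (-g.det) ^ (-(1 / 2) : ℝ) * raiseLastTwo R g b a c d := by
  have hδ : HasDerivAt (fun t : ℝ => (g + t • (0 : Matrix ι ι ℝ)).det) 0 0 := by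
    simpa using hasDerivAt_const (0 : ℝ) g.det
  rw [fderiv_kretschmannLagrangian_eq hdet (hasDerivAt_kretschmannScalar_riemann hg a b c d) hδ]
  ring

theorem fderiv_kretschmannLagrangian_metric {R : ι → ι → ι → ι → ℝ} {g : Matrix ι ι ℝ}
    (hdet : g.det ≠ 0) (i j : ι) :
    fderiv ℝ kretschmannLagrangian (R, g) (0, Matrix.single i j 1)
      = -(1 / 4) * (-g.det) ^ (-(1 / 2) : ℝ)
          * (kretschmannMetricGrad R g i j - kretschmannScalar R g * g⁻¹ j i / 2) := by
  have hδ : HasDerivAt (fun t : ℝ => (g + t • Matrix.single i j 1).det) (g.adjugate j i) 0 := by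
    simp only [Matrix.det_add_smul_single_s14]
    simpa using (hasDerivAt_mul_const (g.adjugate j i)).const_add g.det
  rw [fderiv_kretschmannLagrangian_eq hdet (hasDerivAt_kretschmannScalar_metric R g i j) hδ,
    Matrix.adjugate_apply_div_det]
  ring

theorem sum_fderiv_kretschmannLagrangian_first_eq_second {R : ι → ι → ι → ι → ℝ}
    {g : Matrix ι ι ℝ} (hg : g.IsSymm) (hdet : g.det ≠ 0) (μ ν : ι) :
    ∑ ξ, ∑ β, ∑ l, fderiv ℝ kretschmannLagrangian (R, g)
        ((fun a b c d => if a = ν ∧ b = ξ ∧ c = β ∧ d = l then 1 else 0), 0) * R μ ξ β l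
      = ∑ η, ∑ β, ∑ l, fderiv ℝ kretschmannLagrangian (R, g)
        ((fun a b c d => if a = η ∧ b = μ ∧ c = β ∧ d = l then 1 else 0), 0) * R η ν β l := by
  simp only [fderiv_kretschmannLagrangian_riemann hg hdet, mul_assoc, ← mul_sum]
  rw [sum_raiseLastTwo_first_eq_second hg]

theorem sum_fderiv_kretschmannLagrangian_metric_mul {R : ι → ι → ι → ι → ℝ}
    {g : Matrix ι ι ℝ} (hdet : g.det ≠ 0) (μ ν : ι) :
    ∑ β, fderiv ℝ kretschmannLagrangian (R, g) (0, Matrix.single ν β 1) * g μ β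
      = -(1 / 4) * (-g.det) ^ (-(1 / 2) : ℝ)
          * ((∑ η, ∑ ξ, ∑ l, raiseLastTwo R g ξ η μ l * R η ξ ν l
            + ∑ η, ∑ ξ, ∑ β, raiseLastTwo R g ξ η β μ * R η ξ β ν)
            - kretschmannScalar R g * (1 : Matrix ι ι ℝ) μ ν / 2) := by
  calc _ = ∑ β, (-(1 / 4) * (-g.det) ^ (-(1 / 2) : ℝ) * (kretschmannMetricGrad R g ν β * g μ β)
          - -(1 / 4) * (-g.det) ^ (-(1 / 2) : ℝ) * kretschmannScalar R g / 2 * (g μ β * g⁻¹ β ν)) :=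
        sum_congr rfl fun β _ => by rw [fderiv_kretschmannLagrangian_metric hdet]; ring
    _ = _ := by
      rw [sum_sub_distrib, ← mul_sum, ← mul_sum, sum_kretschmannMetricGrad_mul, ← Matrix.mul_apply,
        Matrix.mul_nonsing_inv _ (isUnit_iff_ne_zero.2 hdet)]
      ring

theorem kretschmann_metric_emt_eq_canonical {R : ι → ι → ι → ι → ℝ}
    {g : Matrix ι ι ℝ} (hg : g.IsSymm) (hdet : g.det ≠ 0) (μ ν : ι) :
    (∑ β, fderiv ℝ kretschmannLagrangian (R, g) (0, Matrix.single ν β 1) * g μ β)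
        + (∑ β, fderiv ℝ kretschmannLagrangian (R, g) (0, Matrix.single β ν 1) * g β μ)
      = (∑ η, ∑ ξ, ∑ l, fderiv ℝ kretschmannLagrangian (R, g)
            ((fun a b c d => if a = η ∧ b = ξ ∧ c = μ ∧ d = l then 1 else 0), 0) * R η ξ ν l)
        + (∑ η, ∑ ξ, ∑ β, fderiv ℝ kretschmannLagrangian (R, g)
            ((fun a b c d => if a = η ∧ b = ξ ∧ c = β ∧ d = μ then 1 else 0), 0) * R η ξ β ν)
        - (if μ = ν then kretschmannLagrangian (R, g) else 0) := by
  have hswap (β : ι) : fderiv ℝ kretschmannLagrangian (R, g) (0, Matrix.single β ν 1) * g β μ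
      = fderiv ℝ kretschmannLagrangian (R, g) (0, Matrix.single ν β 1) * g μ β := by
    rw [fderiv_kretschmannLagrangian_metric hdet, fderiv_kretschmannLagrangian_metric hdet,
      kretschmannMetricGrad_comm hg, hg.inv.apply β ν, hg.apply μ β]
  simp only [hswap, sum_fderiv_kretschmannLagrangian_metric_mul hdet,
    fderiv_kretschmannLagrangian_riemann hg hdet, mul_assoc, ← mul_sum, Matrix.one_apply]
  unfold kretschmannLagrangian
  split_ifs <;> ring

end

/-- for quadratic gravity with the Riemann tensor squared
(Kretschmann scalar, Eqs. (24a)–(24d)): (i) the first-index and second-index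
replacement terms of the tensor identity cancel, and (ii) the metric
energy-momentum tensor density equals the canonical one. -/
theorem kretschmann_emt_identity
    (Riem : Fin 4 → Fin 4 → Fin 4 → Fin 4 → ℝ)
    (G : Matrix (Fin 4) (Fin 4) ℝ) (hG : G.IsSymm) (hdet : G.det < 0)
    (L : (Fin 4 → Fin 4 → Fin 4 → Fin 4 → ℝ) × Matrix (Fin 4) (Fin 4) ℝ → ℝ)
    (hL : L = fun x =>
      -(1 / 4) * (∑ ξ, ∑ η, ∑ ρ, ∑ α, ∑ σ, ∑ l,
          x.1 ξ η ρ α * x.1 η ξ σ l * x.2 ρ σ * x.2 α l)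
        * (-x.2.det) ^ (-(1 / 2) : ℝ)) :
    ∀ μ ν : Fin 4,
      ((∑ ξ, ∑ β, ∑ l, fderiv ℝ L (Riem, G)
          ((fun a b c d => if a = ν ∧ b = ξ ∧ c = β ∧ d = l then 1 else 0), 0)
          * Riem μ ξ β l)
        = (∑ η, ∑ β, ∑ l, fderiv ℝ L (Riem, G)
          ((fun a b c d => if a = η ∧ b = μ ∧ c = β ∧ d = l then 1 else 0), 0)
          * Riem η ν β l)) ∧
      ((∑ β, fderiv ℝ L (Riem, G) (0, Matrix.single ν β 1) * G μ β)
        + (∑ β, fderiv ℝ L (Riem, G) (0, Matrix.single β ν 1) * G β μ)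
        = (∑ η, ∑ ξ, ∑ l, fderiv ℝ L (Riem, G)
            ((fun a b c d => if a = η ∧ b = ξ ∧ c = μ ∧ d = l then 1 else 0), 0)
            * Riem η ξ ν l)
          + (∑ η, ∑ ξ, ∑ β, fderiv ℝ L (Riem, G)
            ((fun a b c d => if a = η ∧ b = ξ ∧ c = β ∧ d = μ then 1 else 0), 0)
            * Riem η ξ β ν)
          - (if μ = ν then L (Riem, G) else 0)) := by
  obtain rfl : L = kretschmannLagrangian := hL
  intro μ ν
  exact ⟨sum_fderiv_kretschmannLagrangian_first_eq_second hG hdet.ne μ ν,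
    kretschmann_metric_emt_eq_canonical hG hdet.ne μ ν⟩
end
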